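/- If the quadratic form X ↦ X^T P X on K^n is non-isotropic for some P ∈ GL_n(K), then for every alternating matrix A ∈ Alt_n(K) and every nonzero λ ∈ K, the matrix PA − λI_n is invertible. -/

import Mathlib

open scoped Matrix

namespace Matrix

variable {ι : Type*} [Fintype ι]

/-- Pairing the terms `(i, j)` and `(j, i)` cancels the off-diagonal part of the double sum. The
zero diagonal is needed separately: in characteristic 2, `Aᵀ = -A` does not force it. -/
theorem dotProduct_mulVec_self_eq_zero_of_alternating {R : Type*} [CommRing R]
    {A : Matrix ι ι R} (hA : Aᵀ = -A) (hdiag : ∀ i, A i i = 0) (v : ι → R) :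
    v ⬝ᵥ A *ᵥ v = 0 := by
  have hsum : v ⬝ᵥ A *ᵥ v = ∑ p : ι × ι, v p.1 * A p.1 p.2 * v p.2 := by
    simp only [dotProduct, mulVec, Finset.mul_sum, Fintype.sum_prod_type, mul_assoc]
  rw [hsum]
  refine Finset.sum_ninvolution Prod.swap (fun ⟨i, j⟩ => ?_) (fun ⟨i, j⟩ hne hswap => ?_)
    (fun _ => Finset.mem_univ _) Prod.swap_swap
  · have hji : A j i = -A i j := congrFun₂ hA i j
    simp only [Prod.swap_prod_mk, hji]
    ring
  · obtain rfl : j = i := congrArg Prod.fst hswap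
    exact hne (by simp [hdiag])

theorem eq_zero_of_mul_mulVec_eq_smul {K : Type*} [Field K] {P A : Matrix ι ι K}
    (hP : ∀ X, X ⬝ᵥ P *ᵥ X = 0 → X = 0) (hA : ∀ X, X ⬝ᵥ A *ᵥ X = 0)
    {μ : K} (hμ : μ ≠ 0) {X : ι → K} (hX : (P * A) *ᵥ X = μ • X) : X = 0 := by
  rw [← mulVec_mulVec] at hX
  have hAX : A *ᵥ X = 0 :=
    hP _ (by rw [hX, dotProduct_smul, dotProduct_comm, hA X, smul_zero])
  rw [hAX, mulVec_zero, eq_comm, smul_eq_zero] at hX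
  exact hX.resolve_left hμ

end Matrix

theorem stmt_7_general {K : Type*} [Field K] {n : ℕ}
    (P : Matrix (Fin n) (Fin n) K)
    (hiso : ∀ X : Fin n → K, X ⬝ᵥ P.mulVec X = 0 → X = 0) :
    ∀ A : Matrix (Fin n) (Fin n) K, Aᵀ = -A → (∀ i, A i i = 0) →
      ∀ μ : K, μ ≠ 0 → IsUnit (P * A - μ • (1 : Matrix (Fin n) (Fin n) K)) := by
  intro A hAlt hdiag μ hμ
  rw [← Matrix.mulVec_injective_iff_isUnit, ← Matrix.coe_mulVecLin, injective_iff_map_eq_zero]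
  intro X hX
  rw [Matrix.coe_mulVecLin, Matrix.sub_mulVec, Matrix.smul_mulVec, Matrix.one_mulVec,
    sub_eq_zero] at hX
  exact Matrix.eq_zero_of_mul_mulVec_eq_smul hiso
    (Matrix.dotProduct_mulVec_self_eq_zero_of_alternating hAlt hdiag) hμ hX

theorem stmt_7 {K : Type*} [Field K] {n : ℕ}
    (P : Matrix (Fin n) (Fin n) K) (hP : IsUnit P)
    (hiso : ∀ X : Fin n → K, X ⬝ᵥ P.mulVec X = 0 → X = 0) :
    ∀ A : Matrix (Fin n) (Fin n) K, Aᵀ = -A → (∀ i, A i i = 0) →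
      ∀ μ : K, μ ≠ 0 → IsUnit (P * A - μ • (1 : Matrix (Fin n) (Fin n) K)) :=
  stmt_7_general P hiso
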